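/- arXiv:2011.11795 — 9 statements merged into one kernel-verified Lean document; each statement's English description precedes it below -/
import Mathlib

section
/- Let X be a random variable taking values in the non-negative integers such that m := E(X) is a positive integer. Then the sum over i from 1 to m of (P(X ≤ m−i) − P(X ≥ m+i)) is non-negative. -/
/-!
Writing `p k = ℙ(X > k)`, the complement rule turns the sum into
`m - ∑_{k < 2m} p k`, and `∑_{k < n} p k = 𝔼[min X n] ≤ 𝔼[X] = m`.
-/

open MeasureTheory
open scoped ProbabilityTheory

lemma Finset.card_filter_range_lt_le (n x : ℕ) :
    ((Finset.range n).filter (· < x)).card ≤ x := by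
  calc ((Finset.range n).filter (· < x)).card ≤ (Finset.range x).card :=
        Finset.card_le_card fun j hj => by simpa using (Finset.mem_filter.1 hj).2
    _ = x := Finset.card_range x

section TailSums

variable {Ω : Type*} [MeasurableSpace Ω] {μ : Measure Ω} {X : Ω → ℕ}

lemma sum_range_measureReal_lt_le_integral [IsFiniteMeasure μ] (hX : Measurable X)
    (hint : Integrable (fun ω => (X ω : ℝ)) μ) (n : ℕ) :
    ∑ j ∈ Finset.range n, μ.real {ω | j < X ω} ≤ ∫ ω, (X ω : ℝ) ∂μ := by
  have hmeas : ∀ j, MeasurableSet {ω | j < X ω} := fun j => hX measurableSet_Ioi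
  have hind : ∀ j, Integrable ({ω | j < X ω}.indicator (1 : Ω → ℝ)) μ := fun j =>
    (integrable_const (1 : ℝ)).indicator (hmeas j)
  calc ∑ j ∈ Finset.range n, μ.real {ω | j < X ω}
      = ∫ ω, ∑ j ∈ Finset.range n, {ω | j < X ω}.indicator (1 : Ω → ℝ) ω ∂μ := by
        rw [integral_finsetSum _ fun j _ => hind j]
        simp only [integral_indicator_one (hmeas _)]
    _ ≤ ∫ ω, (X ω : ℝ) ∂μ := by
        refine integral_mono (integrable_finsetSum _ fun j _ => hind j) hint fun ω => ?_
        simp only [Set.indicator_apply, Set.mem_ofPred_eq, Pi.one_apply, Finset.sum_boole]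
        exact_mod_cast Finset.card_filter_range_lt_le n (X ω)

lemma measureReal_le_eq_one_sub [IsProbabilityMeasure μ] (hX : Measurable X) (j : ℕ) :
    μ.real {ω | X ω ≤ j} = 1 - μ.real {ω | j < X ω} := by
  have hcompl : {ω | X ω ≤ j} = {ω | j < X ω}ᶜ := by
    ext ω
    simp
  have hs : MeasurableSet {ω | j < X ω} := hX measurableSet_Ioi
  rw [hcompl, probReal_compl_eq_one_sub hs]

lemma sum_Icc_measureReal_le_sub_measureReal_ge [IsProbabilityMeasure μ] (hX : Measurable X)
    (m : ℕ) :
    ∑ i ∈ Finset.Icc 1 m, (μ.real {ω | X ω ≤ m - i} - μ.real {ω | m + i ≤ X ω})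
      = m - ∑ k ∈ Finset.range (m + m), μ.real {ω | k < X ω} := by
  set p : ℕ → ℝ := fun k => μ.real {ω | k < X ω}
  have hlow : ∀ j, μ.real {ω | X ω ≤ m - (1 + j)} = 1 - p (m - 1 - j) := fun j => by
    rw [measureReal_le_eq_one_sub hX, Nat.sub_sub]
  have hhigh : ∀ j, μ.real {ω | m + (1 + j) ≤ X ω} = p (m + j) := fun j => by
    simp only [p, add_left_comm m 1 j, Nat.one_add_le_iff]
  rw [← Finset.Ico_add_one_right_eq_Icc, Finset.sum_Ico_eq_sum_range, Finset.sum_range_add,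
    ← Finset.sum_range_reflect p]
  simp only [hlow, hhigh, Nat.add_sub_cancel, Finset.sum_sub_distrib, Finset.sum_const,
    Finset.card_range, nsmul_eq_mul, mul_one]
  ring

end TailSums

theorem stmt1_general {Ω : Type*} [MeasureSpace Ω] [IsProbabilityMeasure (ℙ : Measure Ω)]
    (X : Ω → ℕ) (hX : Measurable X) (hint : Integrable (fun ω => (X ω : ℝ)))
    (m : ℕ) (hmean : (∫ ω, (X ω : ℝ)) = m) :
    0 ≤ ∑ i ∈ Finset.Icc 1 m,
      ((ℙ {ω | X ω ≤ m - i}).toReal - (ℙ {ω | m + i ≤ X ω}).toReal) := by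
  simp only [← measureReal_def]
  rw [sum_Icc_measureReal_le_sub_measureReal_ge hX, sub_nonneg, ← hmean]
  exact sum_range_measureReal_lt_le_integral hX hint _

theorem stmt1 {Ω : Type*} [MeasureSpace Ω] [IsProbabilityMeasure (ℙ : Measure Ω)]
    (X : Ω → ℕ) (hX : Measurable X) (hint : Integrable (fun ω => (X ω : ℝ)))
    (m : ℕ) (hm : 0 < m) (hmean : (∫ ω, (X ω : ℝ)) = m) :
    0 ≤ ∑ i ∈ Finset.Icc 1 m,
      ((ℙ {ω | X ω ≤ m - i}).toReal - (ℙ {ω | m + i ≤ X ω}).toReal) :=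
  stmt1_general X hX hint m hmean
end

section
/- Let s ≥ m be positive integers, and let S and X be independent ℕ-valued random variables such that: (1) S is unimodal with mode s and right-skewed, meaning P(S = s−i) ≤ P(S = s+i−1) for all 1 ≤ i ≤ s; (2) E(X) = m and the sequence α_i := P(X ≤ m−i) − P(X ≥ m+i), for 1 ≤ i ≤ m, changes sign at most once (there exists ℓ ∈ [m] with α_i ≥ 0 for i ≤ ℓ and α_i ≤ 0 for i > ℓ). Then P(S ≥ s) ≥ P(S + X ≥ s + m). -/
/-!
Conditioning on `S`,
`P(S ≥ s) - P(S + X ≥ s + m) = ∑ᵤ P(S = s+u) P(X ≤ m-1-u) - ∑_{u<s} P(S = s-1-u) P(X ≥ m+1+u)`.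
Right-skewness replaces `P(S = s-1-u)` by `P(S = s+u)` in the second sum, so it suffices that
`∑_{u<s} P(S = s+u) α_{u+1} ≥ 0`. As `u ↦ P(S = s+u)` is non-increasing and `α` changes sign once,
at `ℓ`, this sum is at least `P(S = s+ℓ) ∑_{u<s} α_{u+1}`, and the tail-sum formula gives
`∑_{u<s} α_{u+1} ≥ E (m - X)⁺ - E (X - m)⁺ = m - E X = 0`.
-/

open MeasureTheory Finset ProbabilityTheory
open scoped ENNReal

section Decomposition

variable {Ω : Type*} [MeasurableSpace Ω] {μ : Measure Ω} {S X : Ω → ℕ}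

lemma measure_eq_tsum_measure_inter_fiber (hS : Measurable S) {A : Set Ω}
    (hA : MeasurableSet A) : μ A = ∑' j, μ (A ∩ {ω | S ω = j}) := by
  have hdisj : Pairwise (Function.onFun Disjoint fun j => A ∩ {ω | S ω = j}) := fun i j hij =>
    (pairwise_disjoint_fiber S hij).mono Set.inter_subset_right Set.inter_subset_right
  rw [← measure_iUnion hdisj fun j => hA.inter (hS (measurableSet_singleton j)),
    ← Set.inter_iUnion]
  congr
  ext ω
  simp

lemma measure_le_eq_tsum (hS : Measurable S) (n : ℕ) :
    μ {ω | n ≤ S ω} = ∑' u, μ {ω | S ω = u + n} := by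
  rw [measure_eq_tsum_measure_inter_fiber (A := {ω | n ≤ S ω}) hS (hS measurableSet_Ici),
    ← ENNReal.summable.sum_add_tsum_nat_add' (k := n), Finset.sum_eq_zero, zero_add]
  · congr with u
    congr 1
    ext ω
    simp only [Set.mem_inter_iff, Set.mem_ofPred_eq]
    omega
  · intro j hj
    convert measure_empty (μ := μ)
    ext ω
    simp only [Set.mem_inter_iff, Set.mem_ofPred_eq, Set.mem_empty_iff_false, iff_false]
    simp only [mem_range] at hj
    omega

lemma ProbabilityTheory.IndepFun.measure_le_add_eq_tsum (hindep : IndepFun S X μ)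
    (hS : Measurable S) (hX : Measurable X) (n : ℕ) :
    μ {ω | n ≤ S ω + X ω} = ∑' j, μ {ω | S ω = j} * μ {ω | n - j ≤ X ω} := by
  rw [measure_eq_tsum_measure_inter_fiber (A := {ω | n ≤ S ω + X ω}) hS
    ((hS.add hX) measurableSet_Ici)]
  congr with j
  refine Eq.trans ?_ (hindep.measure_inter_preimage_eq_mul {j} (Set.Ici (n - j))
    (measurableSet_singleton j) measurableSet_Ici)
  congr 1
  ext ω
  simp only [Set.mem_inter_iff, Set.mem_ofPred_eq, Set.mem_preimage, Set.mem_singleton_iff,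
    Set.mem_Ici]
  omega

lemma ProbabilityTheory.IndepFun.measure_le_add_add_sum_eq [IsProbabilityMeasure μ]
    (hindep : IndepFun S X μ) (hS : Measurable S) (hX : Measurable X) {s m : ℕ} (hsm : m ≤ s) :
    μ {ω | s + m ≤ S ω + X ω} + ∑ u ∈ range s, μ {ω | S ω = s + u} * μ {ω | X ω + (u + 1) ≤ m}
      = μ {ω | s ≤ S ω}
        + ∑ u ∈ range s, μ {ω | S ω = s - (u + 1)} * μ {ω | m + (u + 1) ≤ X ω} := by
  have hbelow : ∑ j ∈ range s, μ {ω | S ω = j} * μ {ω | s + m - j ≤ X ω}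
      = ∑ u ∈ range s, μ {ω | S ω = s - (u + 1)} * μ {ω | m + (u + 1) ≤ X ω} := by
    rw [← sum_range_reflect]
    refine sum_congr rfl fun u hu => ?_
    rw [mem_range] at hu
    rw [show s - 1 - u = s - (u + 1) by omega,
      show s + m - (s - (u + 1)) = m + (u + 1) by omega]
  have habove : ∑' u, μ {ω | S ω = u + s}
      = ∑' u, μ {ω | S ω = u + s} * μ {ω | m - u ≤ X ω}
        + ∑ u ∈ range s, μ {ω | S ω = s + u} * μ {ω | X ω + (u + 1) ≤ m} := by
    have hcompl : ∀ u, μ {ω | m - u ≤ X ω} + μ {ω | X ω + (u + 1) ≤ m} = 1 := by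
      intro u
      have hc : {ω | X ω + (u + 1) ≤ m} = {ω | m - u ≤ X ω}ᶜ := by
        ext ω
        simp only [Set.mem_ofPred_eq, Set.mem_compl_iff]
        omega
      rw [hc]
      exact prob_add_prob_compl (hX measurableSet_Ici)
    have hvanish : ∀ u ∉ range s, μ {ω | S ω = s + u} * μ {ω | X ω + (u + 1) ≤ m} = 0 := by
      intro u hu
      rw [mem_range] at hu
      convert mul_zero _
      convert measure_empty (μ := μ)
      ext ω
      simp only [Set.mem_ofPred_eq, Set.mem_empty_iff_false, iff_false]
      omega
    rw [← (tsum_eq_sum hvanish : ∑' u, _ = _), ← ENNReal.tsum_add]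
    refine tsum_congr fun u => ?_
    rw [add_comm s u, ← mul_add, hcompl, mul_one]
  rw [hindep.measure_le_add_eq_tsum hS hX, ← ENNReal.summable.sum_add_tsum_nat_add' (k := s),
    hbelow, measure_le_eq_tsum hS, habove]
  simp only [show ∀ u, s + m - (u + s) = m - u by omega]
  ring

end Decomposition

section TailSum

variable {Ω : Type*} [MeasurableSpace Ω] {μ : Measure Ω} {X : Ω → ℕ}

lemma lintegral_natCast_eq_tsum (hX : Measurable X) :
    ∫⁻ ω, (X ω : ℝ≥0∞) ∂μ = ∑' n, μ {ω | n < X ω} := by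
  have hcount : ∀ ω, (X ω : ℝ≥0∞) = ∑' n, {ω | n < X ω}.indicator 1 ω := by
    intro ω
    rw [tsum_eq_sum (s := range (X ω))]
    · simp [Set.indicator, filter_true_of_mem fun n (hn : n ∈ range (X ω)) => mem_range.mp hn]
    · intro n hn
      simp_all
  have hmeas : ∀ n, MeasurableSet {ω | n < X ω} := fun n => hX measurableSet_Ioi
  simp_rw [hcount]
  rw [lintegral_tsum fun n => (measurable_one.indicator (hmeas n)).aemeasurable]
  congr with n
  exact lintegral_indicator_one (hmeas n)

lemma lintegral_natCast_eq_of_integral_eq (hint : Integrable (fun ω => (X ω : ℝ)) μ) {m : ℕ}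
    (hmean : ∫ ω, (X ω : ℝ) ∂μ = m) : ∫⁻ ω, (X ω : ℝ≥0∞) ∂μ = m := by
  rw [← ENNReal.ofReal_natCast, ← hmean, ofReal_integral_eq_lintegral_ofReal hint
    (Filter.Eventually.of_forall fun ω => Nat.cast_nonneg _)]
  simp

lemma lintegral_tsub_eq_lintegral_tsub_of_lintegral_eq [IsProbabilityMeasure μ]
    (hX : Measurable X) {m : ℕ} (hmean : ∫⁻ ω, (X ω : ℝ≥0∞) ∂μ = m) :
    ∫⁻ ω, ((X ω - m : ℕ) : ℝ≥0∞) ∂μ = ∫⁻ ω, ((m - X ω : ℕ) : ℝ≥0∞) ∂μ := by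
  have hmax : ∀ ω, ((X ω - m : ℕ) : ℝ≥0∞) + m = X ω + ((m - X ω : ℕ) : ℝ≥0∞) := by
    intro ω
    norm_cast
    omega
  have h := congrArg (fun f => ∫⁻ ω, f ω ∂μ) (funext hmax)
  simp only at h
  rw [lintegral_add_right _ measurable_const, lintegral_add_left (by fun_prop), lintegral_const,
    measure_univ, mul_one, hmean, add_comm] at h
  exact (ENNReal.add_right_inj (ENNReal.natCast_ne_top m)).mp h

lemma sum_measure_excess_le_sum_measure_deficit [IsProbabilityMeasure μ]
    (hX : Measurable X) {m n : ℕ} (hmean : ∫⁻ ω, (X ω : ℝ≥0∞) ∂μ = m) (hmn : m ≤ n) :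
    ∑ u ∈ range n, μ {ω | m + (u + 1) ≤ X ω} ≤ ∑ u ∈ range n, μ {ω | X ω + (u + 1) ≤ m} := by
  have hexcess : ∑' u, μ {ω | m + (u + 1) ≤ X ω} = ∫⁻ ω, ((X ω - m : ℕ) : ℝ≥0∞) ∂μ := by
    rw [lintegral_natCast_eq_tsum (by fun_prop)]
    congr with u
    congr 1
    ext ω
    simp only [Set.mem_ofPred_eq]
    omega
  have hdeficit :
      ∫⁻ ω, ((m - X ω : ℕ) : ℝ≥0∞) ∂μ = ∑ u ∈ range n, μ {ω | X ω + (u + 1) ≤ m} := by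
    rw [lintegral_natCast_eq_tsum (by fun_prop), tsum_eq_sum]
    · refine sum_congr rfl fun u _ => congrArg μ ?_
      ext ω
      simp only [Set.mem_ofPred_eq]
      omega
    · intro u hu
      convert measure_empty (μ := μ)
      ext ω
      simp only [mem_range] at hu
      simp only [Set.mem_ofPred_eq, Set.mem_empty_iff_false, iff_false]
      omega
  calc ∑ u ∈ range n, μ {ω | m + (u + 1) ≤ X ω}
      ≤ ∑' u, μ {ω | m + (u + 1) ≤ X ω} := ENNReal.sum_le_tsum _
    _ = ∑ u ∈ range n, μ {ω | X ω + (u + 1) ≤ m} := by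
      rw [hexcess, lintegral_tsub_eq_lintegral_tsub_of_lintegral_eq hX hmean, hdeficit]

end TailSum

section SignChange

lemma sum_mul_nonneg_of_antitone_of_sign_change {R : Type*} [Ring R] [LinearOrder R]
    [IsOrderedRing R] {a α : ℕ → R} {n ℓ : ℕ} (ha : Antitone a) (haℓ : 0 ≤ a ℓ)
    (hpos : ∀ u < ℓ, 0 ≤ α u) (hneg : ∀ u, ℓ ≤ u → α u ≤ 0)
    (hsum : 0 ≤ ∑ u ∈ range n, α u) :
    0 ≤ ∑ u ∈ range n, a u * α u := by
  calc 0 ≤ a ℓ * ∑ u ∈ range n, α u := mul_nonneg haℓ hsum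
    _ = ∑ u ∈ range n, a ℓ * α u := mul_sum _ _ _
    _ ≤ ∑ u ∈ range n, a u * α u := sum_le_sum fun u _ => by
      rcases lt_or_ge u ℓ with h | h
      · exact mul_le_mul_of_nonneg_right (ha h.le) (hpos u h)
      · exact mul_le_mul_of_nonpos_right (ha h) (hneg u h)

lemma ENNReal.sum_mul_le_sum_mul_of_sign_change {a F G : ℕ → ℝ≥0∞} {n ℓ : ℕ} (ha : Antitone a)
    (ha₀ : a 0 ≠ ∞) (hF : ∀ u, F u ≠ ∞) (hG : ∀ u, G u ≠ ∞) (hpos : ∀ u < ℓ, G u ≤ F u)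
    (hneg : ∀ u, ℓ ≤ u → F u ≤ G u) (hsum : ∑ u ∈ range n, G u ≤ ∑ u ∈ range n, F u) :
    ∑ u ∈ range n, a u * G u ≤ ∑ u ∈ range n, a u * F u := by
  have ha' : ∀ u, a u ≠ ∞ := fun u => ne_top_of_le_ne_top ha₀ (ha (Nat.zero_le u))
  have haF : ∀ u, a u * F u ≠ ∞ := fun u => ENNReal.mul_ne_top (ha' u) (hF u)
  have haG : ∀ u, a u * G u ≠ ∞ := fun u => ENNReal.mul_ne_top (ha' u) (hG u)
  rw [← ENNReal.toReal_le_toReal (ENNReal.sum_ne_top.2 fun u _ => haG u)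
    (ENNReal.sum_ne_top.2 fun u _ => haF u), ENNReal.toReal_sum fun u _ => haG u,
    ENNReal.toReal_sum fun u _ => haF u]
  rw [← ENNReal.toReal_le_toReal (ENNReal.sum_ne_top.2 fun u _ => hG u)
    (ENNReal.sum_ne_top.2 fun u _ => hF u), ENNReal.toReal_sum fun u _ => hG u,
    ENNReal.toReal_sum fun u _ => hF u] at hsum
  have h := sum_mul_nonneg_of_antitone_of_sign_change (n := n)
    (α := fun u => (F u).toReal - (G u).toReal)
    (fun u v huv => ENNReal.toReal_mono (ha' u) (ha huv)) ENNReal.toReal_nonneg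
    (fun u hu => sub_nonneg.2 (ENNReal.toReal_mono (hF u) (hpos u hu)))
    (fun u hu => sub_nonpos.2 (ENNReal.toReal_mono (hG u) (hneg u hu)))
    (by rw [sum_sub_distrib]; linarith)
  simp only [mul_sub, sum_sub_distrib, sub_nonneg] at h
  simpa only [ENNReal.toReal_mul] using h

lemma exists_measure_excess_deficit_sign_change {Ω : Type*} [MeasurableSpace Ω]
    {μ : Measure Ω} [IsFiniteMeasure μ] {X : Ω → ℕ} {m : ℕ}
    (h : ∃ ℓ ∈ Icc 1 m,
      (∀ i ∈ Icc 1 m, i ≤ ℓ →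
        0 ≤ (μ {ω | X ω ≤ m - i}).toReal - (μ {ω | m + i ≤ X ω}).toReal) ∧
      (∀ i ∈ Icc 1 m, ℓ < i →
        (μ {ω | X ω ≤ m - i}).toReal - (μ {ω | m + i ≤ X ω}).toReal ≤ 0)) :
    ∃ ℓ, (∀ u < ℓ, μ {ω | m + (u + 1) ≤ X ω} ≤ μ {ω | X ω + (u + 1) ≤ m}) ∧
      ∀ u, ℓ ≤ u → μ {ω | X ω + (u + 1) ≤ m} ≤ μ {ω | m + (u + 1) ≤ X ω} := by
  obtain ⟨ℓ, hℓ, hpos, hneg⟩ := h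
  rw [mem_Icc] at hℓ
  have hdeficit : ∀ i ≤ m, {ω | X ω ≤ m - i} = {ω | X ω + i ≤ m} := fun i hi => by
    ext ω
    simp only [Set.mem_ofPred_eq]
    omega
  refine ⟨ℓ, fun u hu => ?_, fun u hu => ?_⟩
  · have h := hpos (u + 1) (mem_Icc.2 ⟨by omega, by omega⟩) (by omega)
    rwa [sub_nonneg, ENNReal.toReal_le_toReal (by finiteness) (by finiteness),
      hdeficit _ (by omega)] at h
  by_cases hum : u < m
  · have h := hneg (u + 1) (mem_Icc.2 ⟨by omega, by omega⟩) (by omega)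
    rwa [sub_nonpos, ENNReal.toReal_le_toReal (by finiteness) (by finiteness),
      hdeficit _ (by omega)] at h
  · have hempty : {ω | X ω + (u + 1) ≤ m} = ∅ :=
      Set.eq_empty_of_forall_notMem fun ω (hω : X ω + (u + 1) ≤ m) => hum (by omega)
    simp [hempty]

end SignChange

theorem stmt2_general {Ω : Type*} [MeasureSpace Ω] [IsProbabilityMeasure (ℙ : Measure Ω)]
    (S X : Ω → ℕ) (hS : Measurable S) (hX : Measurable X)
    (hindep : ProbabilityTheory.IndepFun S X ℙ)
    (s m : ℕ) (hsm : m ≤ s)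
    (hmono₂ : ∀ i j : ℕ, s ≤ i → i ≤ j → ℙ {ω | S ω = j} ≤ ℙ {ω | S ω = i})
    (hskew : ∀ i ∈ Finset.Icc 1 s, ℙ {ω | S ω = s - i} ≤ ℙ {ω | S ω = s + i - 1})
    (hint : Integrable (fun ω => (X ω : ℝ))) (hmean : (∫ ω, (X ω : ℝ)) = m)
    (hL1 : ∃ ℓ ∈ Finset.Icc 1 m,
      (∀ i ∈ Finset.Icc 1 m, i ≤ ℓ →
        0 ≤ (ℙ {ω | X ω ≤ m - i}).toReal - (ℙ {ω | m + i ≤ X ω}).toReal) ∧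
      (∀ i ∈ Finset.Icc 1 m, ℓ < i →
        (ℙ {ω | X ω ≤ m - i}).toReal - (ℙ {ω | m + i ≤ X ω}).toReal ≤ 0)) :
    ℙ {ω | s + m ≤ S ω + X ω} ≤ ℙ {ω | s ≤ S ω} := by
  obtain ⟨ℓ, hexcess_le, hdeficit_le⟩ := exists_measure_excess_deficit_sign_change hL1
  have hkey : ∑ u ∈ range s, ℙ {ω | S ω = s - (u + 1)} * ℙ {ω | m + (u + 1) ≤ X ω}
      ≤ ∑ u ∈ range s, ℙ {ω | S ω = s + u} * ℙ {ω | X ω + (u + 1) ≤ m} :=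
    calc _ ≤ ∑ u ∈ range s, ℙ {ω | S ω = s + u} * ℙ {ω | m + (u + 1) ≤ X ω} := by
          refine sum_le_sum fun u hu => mul_le_mul_left ?_ _
          simpa using hskew (u + 1) (mem_Icc.2 ⟨by omega, by simpa using hu⟩)
      _ ≤ _ := ENNReal.sum_mul_le_sum_mul_of_sign_change
          (fun u v huv => hmono₂ _ _ le_self_add (by omega)) (measure_ne_top _ _)
          (fun _ => measure_ne_top _ _) (fun _ => measure_ne_top _ _) hexcess_le hdeficit_le
          (sum_measure_excess_le_sum_measure_deficit hX
            (lintegral_natCast_eq_of_integral_eq hint hmean) hsm)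
  have hid := hindep.measure_le_add_add_sum_eq hS hX hsm
  exact (ENNReal.add_le_add_iff_right (ENNReal.sum_ne_top.2 fun _ _ => by finiteness)).mp
    (hid.trans_le (by gcongr))

theorem stmt2 {Ω : Type*} [MeasureSpace Ω] [IsProbabilityMeasure (ℙ : Measure Ω)]
    (S X : Ω → ℕ) (hS : Measurable S) (hX : Measurable X)
    (hindep : ProbabilityTheory.IndepFun S X ℙ)
    (s m : ℕ) (hm : 0 < m) (hsm : m ≤ s)
    (hmono₁ : ∀ i j : ℕ, i ≤ j → j ≤ s → ℙ {ω | S ω = i} ≤ ℙ {ω | S ω = j})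
    (hmono₂ : ∀ i j : ℕ, s ≤ i → i ≤ j → ℙ {ω | S ω = j} ≤ ℙ {ω | S ω = i})
    (hskew : ∀ i ∈ Finset.Icc 1 s, ℙ {ω | S ω = s - i} ≤ ℙ {ω | S ω = s + i - 1})
    (hint : Integrable (fun ω => (X ω : ℝ))) (hmean : (∫ ω, (X ω : ℝ)) = m)
    (hL1 : ∃ ℓ ∈ Finset.Icc 1 m,
      (∀ i ∈ Finset.Icc 1 m, i ≤ ℓ →
        0 ≤ (ℙ {ω | X ω ≤ m - i}).toReal - (ℙ {ω | m + i ≤ X ω}).toReal) ∧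
      (∀ i ∈ Finset.Icc 1 m, ℓ < i →
        (ℙ {ω | X ω ≤ m - i}).toReal - (ℙ {ω | m + i ≤ X ω}).toReal ≤ 0)) :
    ℙ {ω | s + m ≤ S ω + X ω} ≤ ℙ {ω | s ≤ S ω} :=
  stmt2_general S X hS hX hindep s m hsm hmono₂ hskew hint hmean hL1
end

section
/- Fix a positive integer m and let X be a Poisson random variable with mean m. Then P(X ≤ m−1) > P(X ≥ m+1). -/
/-!
Pair the atoms at `m - k` and `m + k`: let `d k = P(X = m - k) - P(X = m + k)`, where
`P(X = m - k)` is read as `0` for `k > m`. Then `∑ d k = P(X < m) - P(X > m)`, and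
`∑ k * d k = m - E X = 0`. From `k` to `k + 1` the ratio `P(X = m + k) / P(X = m - k)` is
multiplied by `m² / ((m - k)(m + k + 1))`, which is at most `1` exactly when `k (k + 1) ≤ m`.
So the ratio starts at `1` and first decreases: a negative `d k` forces `k (k + 1) > m`, after
which the ratio keeps increasing, and `d` stays negative once it is negative. If `N` is the first
index with `d N < 0`, every term of `N * ∑ d k = ∑ (N - k) * d k` is nonnegative and the one at
`N + 1` is positive, so `∑ d k > 0`.
-/

open ProbabilityTheory MeasureTheory Finset
open scoped NNReal

theorem pos_of_hasSum_of_moment_eq_zero_of_sign_change {d : ℕ → ℝ} {S : ℝ} (hd : HasSum d S)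
    (hmoment : HasSum (fun k ↦ k * d k) 0)
    (hpersist : ∀ k, d k < 0 → d (k + 1) < 0) (hneg : ∃ k, d k < 0) : 0 < S := by
  classical
  set N := Nat.find hneg
  have hbefore : ∀ k < N, 0 ≤ d k := fun k hk ↦ not_lt.1 (Nat.find_min hneg hk)
  have hafter : ∀ k, N ≤ k → d k < 0 :=
    Nat.le_induction (Nat.find_spec hneg) fun k _ ↦ hpersist k
  have hweighted : HasSum (fun k : ℕ ↦ ((N : ℝ) - k) * d k) (N * S) := by
    simpa only [sub_mul, sub_zero] using (hd.mul_left (N : ℝ)).sub hmoment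
  have hterm : ∀ k : ℕ, 0 ≤ ((N : ℝ) - k) * d k := by
    intro k
    rcases lt_or_ge k N with hk | hk
    · exact mul_nonneg (sub_nonneg.2 (by exact_mod_cast hk.le)) (hbefore k hk)
    · exact mul_nonneg_of_nonpos_of_nonpos (sub_nonpos.2 (by exact_mod_cast hk)) (hafter k hk).le
  have hstrict : 0 < ((N : ℝ) - (N + 1 : ℕ)) * d (N + 1) := by
    push_cast
    linarith [hafter (N + 1) N.le_succ]
  have hNS : 0 < (N : ℝ) * S := hasSum_lt (f := 0) hterm hstrict hasSum_zero hweighted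
  exact pos_of_mul_pos_right hNS N.cast_nonneg

theorem hasSum_ite_le_sub {M : Type*} [AddCommMonoid M] [TopologicalSpace M] (f : ℕ → M)
    (m : ℕ) : HasSum (fun k ↦ if k ≤ m then f (m - k) else 0) (∑ j ∈ range (m + 1), f j) := by
  have hreflect : ∑ j ∈ range (m + 1), f j
      = ∑ k ∈ range (m + 1), if k ≤ m then f (m - k) else 0 := by
    rw [← sum_range_reflect]
    refine sum_congr rfl fun k hk ↦ ?_
    rw [if_pos (Nat.lt_succ_iff.1 (mem_range.1 hk)), Nat.add_sub_cancel]
  rw [hreflect]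
  exact hasSum_sum_of_ne_finset_zero fun k hk ↦ if_neg (by simpa using hk)

theorem HasSum.nat_add_left {G : Type*} [AddCommGroup G] [TopologicalSpace G]
    [IsTopologicalAddGroup G] {f : ℕ → G} {a : G} (hf : HasSum f a) (m : ℕ) :
    HasSum (fun k ↦ f (m + k)) (a - ∑ j ∈ range m, f j) := by
  have h := (hasSum_nat_add_iff' m).2 hf
  simp_rw [add_comm _ m] at h
  exact h

section Poisson

variable (r : ℝ≥0)

theorem poissonMeasure_real_singleton_succ (n : ℕ) :
    (n + 1) * Po(r).real {n + 1} = r * Po(r).real {n} := by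
  rw [poissonMeasure_real_singleton, poissonMeasure_real_singleton, Nat.factorial_succ]
  push_cast
  field_simp
  ring

theorem hasSum_poissonMeasure_real_singleton : HasSum (fun n ↦ Po(r).real {n}) 1 := by
  simpa only [poissonMeasure_real_singleton] using hasSum_one_poissonMeasure r

theorem hasSum_mul_poissonMeasure_real_singleton :
    HasSum (fun n : ℕ ↦ n * Po(r).real {n}) r := by
  rw [← hasSum_nat_add_iff' 1]
  simpa [poissonMeasure_real_singleton_succ] using
    (hasSum_poissonMeasure_real_singleton r).mul_left (r : ℝ)

theorem hasSum_sub_mul_poissonMeasure_real_singleton :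
    HasSum (fun n : ℕ ↦ (r - n) * Po(r).real {n}) 0 := by
  simpa only [sub_mul, mul_one, sub_self] using
    ((hasSum_poissonMeasure_real_singleton r).mul_left (r : ℝ)).sub
      (hasSum_mul_poissonMeasure_real_singleton r)

variable {r}

theorem poissonMeasure_real_singleton_succ_le_of_le {i h : ℕ}
    (hp : Po(r).real {h} ≤ Po(r).real {i + 1}) (hr : (r : ℝ) ^ 2 ≤ (i + 1) * (h + 1)) :
    Po(r).real {h + 1} ≤ Po(r).real {i} := by
  have hpos : (0 : ℝ) < (i + 1) * (h + 1) := by positivity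
  refine le_of_mul_le_mul_left ?_ hpos
  calc (i + 1) * (h + 1) * Po(r).real {h + 1}
      = (i + 1) * r * Po(r).real {h} := by
        rw [mul_assoc, poissonMeasure_real_singleton_succ]; ring
    _ ≤ (i + 1) * r * Po(r).real {i + 1} := by gcongr
    _ = r ^ 2 * Po(r).real {i} := by
        rw [mul_right_comm, poissonMeasure_real_singleton_succ]; ring
    _ ≤ (i + 1) * (h + 1) * Po(r).real {i} := by gcongr

theorem poissonMeasure_real_singleton_lt_succ_of_lt (hr₀ : 0 < r) {i h : ℕ}
    (hp : Po(r).real {i + 1} < Po(r).real {h}) (hr : (i + 1) * (h + 1) ≤ (r : ℝ) ^ 2) :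
    Po(r).real {i} < Po(r).real {h + 1} := by
  have hr₀' : (0 : ℝ) < r := hr₀
  refine lt_of_mul_lt_mul_left ?_ (sq_nonneg (r : ℝ))
  calc (r : ℝ) ^ 2 * Po(r).real {i}
      = (i + 1) * r * Po(r).real {i + 1} := by
        rw [mul_right_comm, poissonMeasure_real_singleton_succ]; ring
    _ < (i + 1) * r * Po(r).real {h} := by gcongr
    _ = (i + 1) * (h + 1) * Po(r).real {h + 1} := by
        rw [mul_assoc _ _ (Po(r).real {h + 1}), poissonMeasure_real_singleton_succ]; ring
    _ ≤ r ^ 2 * Po(r).real {h + 1} := by gcongr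

end Poisson

theorem poissonMeasure_real_singleton_add_le_sub {m k : ℕ} (hk : k ≤ m) (hkk : k * k ≤ m + k) :
    Po(m).real {m + k} ≤ Po(m).real {m - k} := by
  induction k with
  | zero => simp
  | succ k ih =>
    obtain ⟨j, rfl⟩ := Nat.exists_eq_add_of_le hk
    have hsub : k + 1 + j - k = j + 1 := by omega
    rw [Nat.add_sub_cancel_left, ← add_assoc]
    apply poissonMeasure_real_singleton_succ_le_of_le
    · rw [← hsub]
      exact ih (by omega) (by nlinarith)
    · have : ((k * (k + 1) : ℕ) : ℝ) ≤ (k + 1 + j : ℕ) := by exact_mod_cast (by nlinarith)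
      push_cast at this ⊢
      nlinarith

theorem poissonMeasure_real_singleton_sub_succ_lt_add_succ {m k : ℕ} (hk : k < m)
    (h : Po(m).real {m - k} < Po(m).real {m + k}) :
    Po(m).real {m - (k + 1)} < Po(m).real {m + (k + 1)} := by
  have hkk : m + k < k * k := by
    by_contra! hkk
    exact h.not_ge (poissonMeasure_real_singleton_add_le_sub hk.le hkk)
  obtain ⟨j, rfl⟩ := Nat.exists_eq_add_of_le hk
  have hsub : k + 1 + j - k = j + 1 := by omega
  rw [hsub] at h
  rw [Nat.add_sub_cancel_left, ← add_assoc]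
  apply poissonMeasure_real_singleton_lt_succ_of_lt (by simp) h
  have : ((k + 1 + j + k : ℕ) : ℝ) < (k * k : ℕ) := by exact_mod_cast hkk
  push_cast at this ⊢
  nlinarith

noncomputable def poissonCentralDiff (m k : ℕ) : ℝ :=
  (if k ≤ m then Po(m).real {m - k} else 0) - Po(m).real {m + k}

theorem hasSum_poissonCentralDiff (m : ℕ) :
    HasSum (poissonCentralDiff m)
      (∑ j ∈ range (m + 1), Po(m).real {j} - (1 - ∑ j ∈ range m, Po(m).real {j})) := by
  unfold poissonCentralDiff
  exact (hasSum_ite_le_sub (fun j ↦ Po(m).real {j}) m).sub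
    ((hasSum_poissonMeasure_real_singleton _).nat_add_left m)

theorem hasSum_mul_poissonCentralDiff (m : ℕ) :
    HasSum (fun k : ℕ ↦ k * poissonCentralDiff m k) 0 := by
  set g : ℕ → ℝ := fun j ↦ (m - j) * Po(m).real {j}
  have hlow : HasSum (fun k : ℕ ↦ k * if k ≤ m then Po(m).real {m - k} else 0)
      (∑ j ∈ range m, g j) := by
    have h := hasSum_ite_le_sub g m
    rw [sum_range_succ, show g m = 0 by simp [g], add_zero] at h
    convert h using 2 with k
    split_ifs with hk
    · simp [g, Nat.cast_sub hk]
    · simp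
  have hhigh : HasSum (fun k : ℕ ↦ k * Po(m).real {m + k}) (∑ j ∈ range m, g j) := by
    have h := ((hasSum_sub_mul_poissonMeasure_real_singleton (m : ℝ≥0)).nat_add_left m).neg
    simpa [g] using h
  simpa only [poissonCentralDiff, mul_sub, sub_self] using hlow.sub hhigh

theorem poissonCentralDiff_succ_neg {m k : ℕ} (hm : 0 < m) (h : poissonCentralDiff m k < 0) :
    poissonCentralDiff m (k + 1) < 0 := by
  unfold poissonCentralDiff at h ⊢
  rcases lt_or_ge k m with hk | hk
  · rw [if_pos hk.le] at h
    rw [if_pos (by omega), sub_neg]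
    exact poissonMeasure_real_singleton_sub_succ_lt_add_succ hk (sub_neg.1 h)
  · rw [if_neg (by omega), zero_sub, neg_neg_iff_pos]
    exact poissonMeasure_real_singleton_pos _ (by simpa using hm)

theorem poissonCentralDiff_neg {m : ℕ} (hm : 0 < m) : poissonCentralDiff m (m + 1) < 0 := by
  rw [poissonCentralDiff, if_neg (by omega), zero_sub, neg_neg_iff_pos]
  exact poissonMeasure_real_singleton_pos _ (by simpa using hm)

theorem stmt6 (m : ℕ) (hm : 0 < m) :
    poissonMeasure (m : ℝ≥0) {n : ℕ | m + 1 ≤ n} < poissonMeasure (m : ℝ≥0) {n : ℕ | n ≤ m - 1} := by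
  have hupper : {n : ℕ | m + 1 ≤ n} = (↑(range (m + 1)) : Set ℕ)ᶜ := by
    ext n
    simp
  have hlower : {n : ℕ | n ≤ m - 1} = ↑(range m) := by
    ext n
    simp only [Set.mem_ofPred_eq, coe_range, Set.mem_Iio]
    omega
  have hpos := pos_of_hasSum_of_moment_eq_zero_of_sign_change (hasSum_poissonCentralDiff m)
    (hasSum_mul_poissonCentralDiff m) (fun _ ↦ poissonCentralDiff_succ_neg hm)
    ⟨m + 1, poissonCentralDiff_neg hm⟩
  rw [← ENNReal.toReal_lt_toReal (measure_ne_top _ _) (measure_ne_top _ _), ← measureReal_def,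
    ← measureReal_def, hupper, hlower, probReal_compl_eq_one_sub (Finset.measurableSet _),
    ← sum_measureReal_singleton, ← sum_measureReal_singleton]
  linarith
end

section
/- Fix a positive integer s and let S be a Poisson random variable with mean s. Then S is right-skewed with mode s: P(S = s−i) ≤ P(S = s+i−1) for all i ∈ {1,...,s}. -/
/-!
Writing `s = n + k + 1` and `i = k + 1`, the inequality becomes
`(n + 2k + 1)! ≤ s ^ (2k + 1) * n!`: the `2k + 1` factors `n + 1, …, n + 2k + 1` of the
quotient are centred at `s`, and pairing `s - j` with `s + j` gives `(s - j)(s + j) ≤ s²`.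
-/

open ProbabilityTheory
open scoped NNReal Nat

set_option linter.deprecated false

theorem Nat.factorial_add_two_mul_add_one_le (n k : ℕ) :
    (n + 2 * k + 1)! ≤ (n + k + 1) ^ (2 * k + 1) * n ! := by
  induction k generalizing n with
  | zero => simp [Nat.factorial_succ]
  | succ k ih =>
    have hpair : (n + 2 * k + 3) * (n + 1) ≤ (n + k + 2) ^ 2 := by nlinarith
    calc (n + 2 * (k + 1) + 1)! = (n + 2 * k + 3) * (n + 1 + 2 * k + 1)! := by
          rw [show n + 2 * (k + 1) + 1 = (n + 1 + 2 * k + 1) + 1 by ring, Nat.factorial_succ]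
          ring_nf
      _ ≤ (n + 2 * k + 3) * ((n + k + 2) ^ (2 * k + 1) * (n + 1)!) := by
          gcongr
          simpa only [show n + 1 + k + 1 = n + k + 2 by ring] using ih (n + 1)
      _ = (n + 2 * k + 3) * (n + 1) * (n + k + 2) ^ (2 * k + 1) * n ! := by
          rw [Nat.factorial_succ]; ring
      _ ≤ (n + k + 2) ^ 2 * (n + k + 2) ^ (2 * k + 1) * n ! := by gcongr
      _ = (n + (k + 1) + 1) ^ (2 * (k + 1) + 1) * n ! := by ring

theorem ProbabilityTheory.poissonPMFReal_le_poissonPMFReal_add {r : ℝ≥0} {a d : ℕ}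
    (h : ((a + d)! : ℝ) ≤ (r : ℝ) ^ d * a !) :
    poissonPMFReal r a ≤ poissonPMFReal r (a + d) := by
  unfold poissonPMFReal
  rw [div_le_div_iff₀ (by positivity) (by positivity), pow_add]
  calc Real.exp (-r) * r ^ a * ((a + d)! : ℝ)
      ≤ Real.exp (-r) * r ^ a * (r ^ d * a !) := by gcongr
    _ = Real.exp (-r) * (r ^ a * r ^ d) * a ! := by ring

theorem stmt7_general (s : ℕ) :
    ∀ i ∈ Finset.Icc 1 s,
      poissonPMFReal (s : ℝ≥0) (s - i) ≤ poissonPMFReal (s : ℝ≥0) (s + i - 1) := by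
  intro i hi
  obtain ⟨hi1, his⟩ := Finset.mem_Icc.mp hi
  obtain ⟨k, rfl⟩ := Nat.exists_eq_add_of_le' hi1
  obtain ⟨n, rfl⟩ := Nat.exists_eq_add_of_le' his
  rw [show n + (k + 1) - (k + 1) = n by omega,
    show n + (k + 1) + (k + 1) - 1 = n + (2 * k + 1) by omega]
  apply poissonPMFReal_le_poissonPMFReal_add
  rw [← add_assoc, NNReal.coe_natCast]
  exact_mod_cast Nat.factorial_add_two_mul_add_one_le n k

theorem stmt7 (s : ℕ) (hs : 0 < s) :
    ∀ i ∈ Finset.Icc 1 s,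
      poissonPMFReal (s : ℝ≥0) (s - i) ≤ poissonPMFReal (s : ℝ≥0) (s + i - 1) :=
  stmt7_general s
end

section
/- Fix an integer m ≥ 3 and let X ∼ Poisson(m). Define a_i := P(X = m−i) − P(X = m+i) for i ∈ {1,...,m}. Then the sequence {a_i} changes sign at most once: there exists k such that a_i > 0 for i ≤ k and a_i ≤ 0 for i > k. -/
/-!
Write `p = poissonPMFReal m` and `R i = p (m + i) / p (m - i)`, so that `a_i ≤ 0` iff `1 ≤ R i`.
Since `p (n + 1) = p n * m / (n + 1)`, we get `R (i + 1) = R i * m² / ((m + i + 1) (m - i))`,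
and `(m + i + 1) (m - i) = m² + m - i (i + 1)`. Starting from `R 0 = 1`, the ratio therefore
decreases strictly while `i (i + 1) < m` and is nondecreasing afterwards, so once `R i ≥ 1`
it stays `≥ 1`.
-/

open ProbabilityTheory Finset
open scoped NNReal

set_option linter.deprecated false

lemma Nat.exists_threshold_Icc {P : ℕ → Prop} {n : ℕ}
    (hP : ∀ i, 1 ≤ i → i < n → P i → P (i + 1)) :
    ∃ k, (∀ i ∈ Icc 1 n, i ≤ k → ¬P i) ∧ (∀ i ∈ Icc 1 n, k < i → P i) := by
  classical
  let Q i := ∀ j ∈ Icc 1 i, ¬P j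
  refine ⟨Nat.findGreatest Q n, fun i hi hik => ?_, fun i hi hki => ?_⟩
  · have hQ : Q (Nat.findGreatest Q n) :=
      Nat.findGreatest_spec (zero_le n) fun j hj hj0 => by simp at hj
    exact hQ i (mem_Icc.2 ⟨(mem_Icc.1 hi).1, hik⟩)
  · obtain ⟨hi1, hin⟩ := mem_Icc.1 hi
    have hnQ := Nat.findGreatest_is_greatest hki hin
    simp only [Q, not_forall, not_not, mem_Icc] at hnQ
    obtain ⟨j, ⟨hj1, hji⟩, hPj⟩ := hnQ
    clear hi hki hi1
    induction i, hji using Nat.le_induction with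
    | base => exact hPj
    | succ l hjl ih => exact hP l (hj1.trans hjl) hin (ih (by omega))

lemma ProbabilityTheory.poissonPMFReal_succ (r : ℝ≥0) (n : ℕ) :
    poissonPMFReal r (n + 1) = poissonPMFReal r n * r / (n + 1) := by
  simp only [poissonPMFReal, Nat.factorial_succ, Nat.cast_mul, pow_succ]
  field_simp
  push_cast
  ring

noncomputable def poissonCentralRatio (m i : ℕ) : ℝ :=
  poissonPMFReal m (m + i) / poissonPMFReal m (m - i)

noncomputable def poissonCentralFactor (m i : ℕ) : ℝ :=
  (m : ℝ) ^ 2 / ((m + i + 1) * (m - i))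

variable {m : ℕ}

lemma poissonCentralFactor_nonneg {i : ℕ} (hi : i ≤ m) : 0 ≤ poissonCentralFactor m i := by
  have hmi : (0 : ℝ) ≤ m - i := by simpa using hi
  unfold poissonCentralFactor
  positivity

lemma poissonCentralFactor_lt_one_iff {i : ℕ} (hi : i < m) :
    poissonCentralFactor m i < 1 ↔ i * (i + 1) < m := by
  have hmi : (0 : ℝ) < m - i := by simpa using hi
  rw [poissonCentralFactor, div_lt_one (by positivity), ← Nat.cast_lt (α := ℝ)]
  push_cast
  constructor <;> intro h <;> nlinarith

namespace poissonCentralRatio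

lemma sub_nonpos_iff (hm : 0 < m) (i : ℕ) :
    poissonPMFReal m (m - i) - poissonPMFReal m (m + i) ≤ 0 ↔ 1 ≤ poissonCentralRatio m i := by
  rw [sub_nonpos, poissonCentralRatio, one_le_div (poissonPMFReal_pos (by exact_mod_cast hm))]

lemma zero_eq (hm : 0 < m) : poissonCentralRatio m 0 = 1 :=
  div_self (poissonPMFReal_pos (by exact_mod_cast hm)).ne'

lemma succ_eq {i : ℕ} (hi : i < m) :
    poissonCentralRatio m (i + 1) =
      poissonCentralRatio m i * poissonCentralFactor m i := by
  have hleft : poissonPMFReal m (m - i) = poissonPMFReal m (m - (i + 1)) * m / (m - i) := by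
    rw [show m - i = m - (i + 1) + 1 by omega, poissonPMFReal_succ]
    push_cast [Nat.cast_sub hi]
    ring_nf
  have hright : poissonPMFReal m (m + (i + 1)) = poissonPMFReal m (m + i) * m / (m + i + 1) := by
    rw [← add_assoc, poissonPMFReal_succ]
    push_cast
    ring
  have hmi : (0 : ℝ) < m - i := by simpa using hi
  simp only [poissonCentralRatio, poissonCentralFactor, hleft, hright]
  field_simp


lemma nonneg (m i : ℕ) : 0 ≤ poissonCentralRatio m i :=
  div_nonneg poissonPMFReal_nonneg poissonPMFReal_nonneg

lemma lt_one_of_mul_succ_lt {i : ℕ} (hi : i * (i + 1) < m) : poissonCentralRatio m (i + 1) < 1 := by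
  have him : i < m := by nlinarith
  rw [succ_eq him]
  refine mul_lt_one_of_nonneg_of_lt_one_right ?_ (poissonCentralFactor_nonneg him.le)
    ((poissonCentralFactor_lt_one_iff him).2 hi)
  cases i with
  | zero => simp [zero_eq him]
  | succ j => exact (lt_one_of_mul_succ_lt (by nlinarith)).le

lemma one_le_succ_of_one_le {i : ℕ} (hi : 1 ≤ i) (him : i < m)
    (h : 1 ≤ poissonCentralRatio m i) : 1 ≤ poissonCentralRatio m (i + 1) := by
  obtain ⟨j, rfl⟩ := Nat.exists_eq_add_of_le' hi
  have hj : m ≤ j * (j + 1) := by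
    by_contra! hj
    exact (lt_one_of_mul_succ_lt hj).not_ge h
  have hfactor : 1 ≤ poissonCentralFactor m (j + 1) :=
    not_lt.1 <| mt (poissonCentralFactor_lt_one_iff him).1 (by nlinarith)
  rw [succ_eq him]
  exact one_le_mul_of_one_le_of_one_le h hfactor

end poissonCentralRatio

theorem stmt13_general (m : ℕ) :
    ∃ k : ℕ,
      (∀ i ∈ Finset.Icc 1 m, i ≤ k →
        0 < poissonPMFReal (m : ℝ≥0) (m - i) - poissonPMFReal (m : ℝ≥0) (m + i)) ∧
      (∀ i ∈ Finset.Icc 1 m, k < i →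
        poissonPMFReal (m : ℝ≥0) (m - i) - poissonPMFReal (m : ℝ≥0) (m + i) ≤ 0) := by
  have hclosed : ∀ i, 1 ≤ i → i < m →
      poissonPMFReal m (m - i) - poissonPMFReal m (m + i) ≤ 0 →
      poissonPMFReal m (m - (i + 1)) - poissonPMFReal m (m + (i + 1)) ≤ 0 := by
    intro i hi him h
    rw [poissonCentralRatio.sub_nonpos_iff (by omega)] at h ⊢
    exact poissonCentralRatio.one_le_succ_of_one_le hi him h
  obtain ⟨k, hpos, hnonpos⟩ := Nat.exists_threshold_Icc hclosed
  exact ⟨k, fun i hi hik => not_le.1 (hpos i hi hik), hnonpos⟩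

theorem stmt13 (m : ℕ) (hm : 3 ≤ m) :
    ∃ k : ℕ,
      (∀ i ∈ Finset.Icc 1 m, i ≤ k →
        0 < poissonPMFReal (m : ℝ≥0) (m - i) - poissonPMFReal (m : ℝ≥0) (m + i)) ∧
      (∀ i ∈ Finset.Icc 1 m, k < i →
        poissonPMFReal (m : ℝ≥0) (m - i) - poissonPMFReal (m : ℝ≥0) (m + i) ≤ 0) :=
  stmt13_general m
end

section
/- Fix a positive integer m and let X ∼ Poisson(m). Define β_i := P(X = m+i)/P(X = m−i) for i ∈ {1,...,m}. Then β_i ≥ β_{i+1} if and only if i² + i ≤ m; consequently the sequence {β_i}_{i=1}^m is U-shaped (first non-increasing, then non-decreasing). -/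
open ProbabilityTheory Real
open scoped NNReal

lemma beta_eq (m i : ℕ) (hm : 0 < m) (hi : i ≤ m) :
    poissonPMFReal (m : ℝ≥0) (m + i) / poissonPMFReal (m : ℝ≥0) (m - i)
      = (m : ℝ) ^ (2 * i) * (Nat.factorial (m - i)) / (Nat.factorial (m + i)) := by
  unfold poissonPMFReal
  have hc : ((m : ℝ≥0) : ℝ) = (m : ℝ) := by norm_num
  rw [hc]
  have hm' : (0:ℝ) < m := by exact_mod_cast hm
  have h1 : ((Nat.factorial (m + i)) : ℝ) ≠ 0 := by positivity
  have h2 : ((Nat.factorial (m - i)) : ℝ) ≠ 0 := by positivity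
  have h3 : (m:ℝ) ^ (m - i) ≠ 0 := by positivity
  have hx : Real.exp (-(m:ℝ)) ≠ 0 := Real.exp_ne_zero _
  have hpow : (m:ℝ) ^ (m + i) = (m:ℝ) ^ (2 * i) * (m:ℝ) ^ (m - i) := by
    rw [← pow_add]; congr 1; omega
  field_simp
  rw [hpow]; ring

lemma beta_step (m i : ℕ) (hm : 0 < m) (h1 : 1 ≤ i) (h2 : i + 1 ≤ m) :
    poissonPMFReal (m : ℝ≥0) (m + (i + 1)) / poissonPMFReal (m : ℝ≥0) (m - (i + 1))
      ≤ poissonPMFReal (m : ℝ≥0) (m + i) / poissonPMFReal (m : ℝ≥0) (m - i)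
      ↔ i ^ 2 + i ≤ m := by
  rw [beta_eq m (i+1) hm h2, beta_eq m i hm (by omega)]
  have hm' : (0:ℝ) < m := by exact_mod_cast hm
  have hF : (0:ℝ) < (Nat.factorial (m + i)) := by positivity
  have hF1 : (0:ℝ) < (Nat.factorial (m + (i+1))) := by positivity
  have hG : (0:ℝ) < (Nat.factorial (m - (i+1))) := by positivity
  rw [div_le_div_iff₀ hF1 hF]
  have e1 : (Nat.factorial (m + (i+1)) : ℝ) = (m + i + 1) * (Nat.factorial (m + i)) := by
    have : m + (i+1) = (m + i) + 1 := by omega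
    rw [this, Nat.factorial_succ]; push_cast; ring
  have e2 : (Nat.factorial (m - i) : ℝ) = (m - i) * (Nat.factorial (m - (i+1))) := by
    have h : m - i = (m - (i+1)) + 1 := by omega
    rw [h, Nat.factorial_succ]
    push_cast [Nat.cast_sub (by omega : i + 1 ≤ m)]
    ring
  rw [e1, e2]
  have epow : (m:ℝ) ^ (2 * (i+1)) = (m:ℝ) ^ (2*i) * (m:ℝ)^2 := by
    ring
  have hpos : (0:ℝ) < (m:ℝ)^(2*i) * (Nat.factorial (m - (i+1))) * (Nat.factorial (m + i)) := by
    positivity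
  constructor
  · intro h
    rw [epow] at h
    have key : (m:ℝ)^2 ≤ ((m:ℝ) - i) * ((m:ℝ) + i + 1) := by
      nlinarith [hpos]
    have : (i:ℝ)^2 + i ≤ m := by nlinarith
    exact_mod_cast this
  · intro h
    have h' : (i:ℝ)^2 + i ≤ m := by exact_mod_cast h
    rw [epow]
    nlinarith [hpos]

theorem stmt14 (m : ℕ) (hm : 0 < m) :
    (∀ i : ℕ, 1 ≤ i → i + 1 ≤ m →
      (poissonPMFReal (m : ℝ≥0) (m + (i + 1)) / poissonPMFReal (m : ℝ≥0) (m - (i + 1))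
        ≤ poissonPMFReal (m : ℝ≥0) (m + i) / poissonPMFReal (m : ℝ≥0) (m - i)
        ↔ i ^ 2 + i ≤ m)) ∧
    (∃ ℓ ∈ Finset.Icc 1 m,
      (∀ i j : ℕ, 1 ≤ i → i ≤ j → j ≤ ℓ →
        poissonPMFReal (m : ℝ≥0) (m + j) / poissonPMFReal (m : ℝ≥0) (m - j)
          ≤ poissonPMFReal (m : ℝ≥0) (m + i) / poissonPMFReal (m : ℝ≥0) (m - i)) ∧
      (∀ i j : ℕ, ℓ ≤ i → i ≤ j → j ≤ m →
        poissonPMFReal (m : ℝ≥0) (m + i) / poissonPMFReal (m : ℝ≥0) (m - i)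
          ≤ poissonPMFReal (m : ℝ≥0) (m + j) / poissonPMFReal (m : ℝ≥0) (m - j))) := by
  refine ⟨fun i h1 h2 => beta_step m i hm h1 h2, ?_⟩
  set g := Nat.findGreatest (fun k => k ^ 2 + k ≤ m) m with hg
  have hgm : g ≤ m := Nat.findGreatest_le m
  set ℓ := min m (g + 1) with hℓ
  have hℓ1 : 1 ≤ ℓ := by omega
  have hℓm : ℓ ≤ m := by omega
  have hdecP : ∀ k, 1 ≤ k → k < ℓ → k ^ 2 + k ≤ m := by
    intro k hk1 hkℓ
    have hkg : k ≤ g := by omega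
    have hPg : g ^ 2 + g ≤ m :=
      Nat.findGreatest_of_ne_zero (P := fun k => k ^ 2 + k ≤ m) hg.symm (by omega)
    nlinarith
  have hincP : ∀ k, ℓ ≤ k → k + 1 ≤ m → ¬ (k ^ 2 + k ≤ m) := by
    intro k hkℓ hkm
    exact Nat.findGreatest_is_greatest (P := fun k => k ^ 2 + k ≤ m) (n := m) (by rw [← hg]; omega) (by omega)
  refine ⟨ℓ, Finset.mem_Icc.mpr ⟨hℓ1, hℓm⟩, ?_, ?_⟩
  · intro i j h1 hij
    induction j, hij using Nat.le_induction with
    | base => intro _; exact le_refl _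
    | succ j hij ih =>
      intro hjl
      have hj1 : 1 ≤ j := le_trans h1 hij
      have hstep := (beta_step m j hm hj1 (by omega)).mpr (hdecP j hj1 (by omega))
      exact hstep.trans (ih (by omega))
  · intro i j hi hij
    induction j, hij using Nat.le_induction with
    | base => intro _; exact le_refl _
    | succ j hij ih =>
      intro hjm
      have hj1 : 1 ≤ j := le_trans hℓ1 (le_trans hi hij)
      have hstep := (beta_step m j hm hj1 (by omega)).not.mpr (hincP j (le_trans hi hij) (by omega))
      exact (ih (by omega)).trans (le_of_lt (not_le.mp hstep))
end

section
/- Let {λ_i}_{i≥1} be a sequence of positive integers satisfying λ_1 + ... + λ_k ≥ λ_{k+1} for all k ≥ 1, and let {X_i}_{i≥1} be independent random variables with X_i ∼ Poisson(λ_i). Then for every k ≥ 1, P(Σ_{i=1}^k X_i ≥ Σ_{i=1}^k λ_i) ≥ P(Σ_{i=1}^{k+1} X_i ≥ Σ_{i=1}^{k+1} λ_i). -/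
/-
Sums of independent Poisson variables are Poisson, so the two probabilities are `P(Po(S) ≥ S)` for
the integers `S = λ₁ + ⋯ + λₖ ≤ S + λₖ₊₁`; it suffices that `n ↦ P(Po(n) ≥ n)` is antitone on `ℕ`.
Comparing `P(Po(n) < n)` with `P(Po(n+1) < n+1)` amounts to
`e · ∑_{m<n} n^m/m! ≤ ∑_{m≤n} (n+1)^m/m!`. As a Cauchy product the right side is
`∑_{k≤n} n^k/k! · ∑_{j≤n-k} 1/j!`, so the defect is `∑_{k<n} n^k/k! · T(n+1-k)` where
`T(N) = e - ∑_{j<N} 1/j!`. Since `n^k/k! ≤ n^n/n!` for `k ≤ n` and `∑_{r≥2} T(r) = 1`, it is at most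
`n^n/n!`, the `k = n` term of the right side.
-/

open MeasureTheory ProbabilityTheory Finset Real
open scoped NNReal Nat

theorem add_pow_div_factorial {K : Type*} [Field K] [CharZero K] (x y : K) (m : ℕ) :
    (x + y) ^ m / m ! = ∑ k ∈ range (m + 1), x ^ k / k ! * (y ^ (m - k) / (m - k)!) := by
  rw [add_pow, sum_div]
  refine sum_congr rfl fun k hk => ?_
  have hkm : k ≤ m := Nat.lt_succ_iff.mp (mem_range.mp hk)
  have hkf : (k ! : K) ≠ 0 := Nat.cast_ne_zero.mpr k.factorial_ne_zero
  have hmk : ((m - k)! : K) ≠ 0 := Nat.cast_ne_zero.mpr (m - k).factorial_ne_zero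
  have hm : (m ! : K) ≠ 0 := Nat.cast_ne_zero.mpr m.factorial_ne_zero
  rw [Nat.cast_choose K hkm]
  field_simp

theorem sum_range_add_pow_div_factorial {K : Type*} [Field K] [CharZero K] (x y : K) (N : ℕ) :
    ∑ m ∈ range N, (x + y) ^ m / m ! =
      ∑ k ∈ range N, x ^ k / k ! * ∑ j ∈ range (N - k), y ^ j / j ! := by
  simp only [add_pow_div_factorial, mul_sum]
  exact sum_range_diag_flip N fun k j => x ^ k / k ! * (y ^ j / j !)

theorem pow_div_factorial_le_pow_div_factorial {x : ℝ} {k n : ℕ} (hk : k ≤ n) (hn : (n : ℝ) ≤ x) :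
    x ^ k / k ! ≤ x ^ n / n ! := by
  have hx : 0 ≤ x := (Nat.cast_nonneg n).trans hn
  have hfact : (n ! : ℝ) ≤ k ! * x ^ (n - k) := by
    have hdesc : (n.descFactorial (n - k) : ℝ) ≤ x ^ (n - k) := calc
      (n.descFactorial (n - k) : ℝ) ≤ (n : ℝ) ^ (n - k) := mod_cast Nat.descFactorial_le_pow n _
      _ ≤ x ^ (n - k) := pow_le_pow_left₀ (Nat.cast_nonneg n) hn _
    rw [← Nat.factorial_mul_descFactorial (Nat.sub_le n k), Nat.sub_sub_self hk, Nat.cast_mul]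
    gcongr
  rw [div_le_div_iff₀ (by positivity) (by positivity)]
  calc x ^ k * n ! ≤ x ^ k * (k ! * x ^ (n - k)) := by gcongr
    _ = x ^ n * k ! := by rw [← pow_sub_mul_pow x hk]; ring

noncomputable def expTail (n : ℕ) : ℝ := exp 1 - ∑ m ∈ range n, 1 / (m ! : ℝ)

theorem expTail_eq_expTail_succ_add (n : ℕ) : expTail n = expTail (n + 1) + 1 / n ! := by
  simp only [expTail, sum_range_succ]
  ring

theorem expTail_nonneg (n : ℕ) : 0 ≤ expTail n := by
  simpa [expTail] using sum_le_exp_of_nonneg zero_le_one n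

theorem natCast_mul_expTail_le (n : ℕ) : n * expTail (n + 2) ≤ 1 / (n + 1)! := by
  have hbound : expTail (n + 2) ≤ (n + 3) / ((n + 2) * (n + 1)! * (n + 2)) := by
    have := exp_bound' zero_le_one le_rfl (n := n + 2) (by omega)
    rw [Nat.factorial_succ (n + 1)] at this
    push_cast at this
    simp only [one_pow, one_mul, show (n : ℝ) + 1 + 1 = n + 2 by ring,
      show (n : ℝ) + 2 + 1 = n + 3 by ring] at this
    rw [expTail]
    linarith
  calc (n : ℝ) * expTail (n + 2) ≤ n * ((n + 3) / ((n + 2) * (n + 1)! * (n + 2))) := by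
        gcongr
    _ ≤ 1 / (n + 1)! := by
        rw [mul_div_assoc', div_le_div_iff₀ (by positivity) (by positivity)]
        have : (0 : ℝ) < (n + 1)! := by positivity
        nlinarith

theorem sum_expTail_add_two (n : ℕ) :
    ∑ r ∈ range n, expTail (r + 2) = 1 - expTail (n + 1) + (n + 1) * expTail (n + 2) := by
  induction n with
  | zero => simp [expTail_eq_expTail_succ_add 1]
  | succ n ih =>
    rw [sum_range_succ, ih, expTail_eq_expTail_succ_add (n + 1),
      expTail_eq_expTail_succ_add (n + 2), Nat.factorial_succ (n + 1)]
    have : (0 : ℝ) < (n + 1)! := by positivity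
    push_cast
    field_simp
    ring

theorem sum_expTail_add_two_le_one (n : ℕ) : ∑ r ∈ range n, expTail (r + 2) ≤ 1 := by
  rw [sum_expTail_add_two]
  linarith [natCast_mul_expTail_le n, expTail_eq_expTail_succ_add (n + 1)]

theorem exp_one_mul_sum_pow_div_factorial_le (n : ℕ) :
    exp 1 * ∑ m ∈ range n, (n : ℝ) ^ m / m ! ≤ ∑ m ∈ range (n + 1), ((n : ℝ) + 1) ^ m / m ! := by
  have htail : ∑ k ∈ range n, (n : ℝ) ^ k / k ! * expTail (n + 1 - k) ≤ n ^ n / n ! := calc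
    _ ≤ ∑ k ∈ range n, (n : ℝ) ^ n / n ! * expTail (n + 1 - k) :=
        sum_le_sum fun k hk => mul_le_mul_of_nonneg_right
          (pow_div_factorial_le_pow_div_factorial (mem_range.mp hk).le le_rfl) (expTail_nonneg _)
    _ = (n : ℝ) ^ n / n ! * ∑ r ∈ range n, expTail (r + 2) := by
        rw [← mul_sum, ← sum_range_reflect]
        congr 1
        refine sum_congr rfl fun r hr => ?_
        rw [show n + 1 - (n - 1 - r) = r + 2 by have := mem_range.mp hr; omega]
    _ ≤ n ^ n / n ! := mul_le_of_le_one_right (by positivity) (sum_expTail_add_two_le_one n)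
  calc exp 1 * ∑ m ∈ range n, (n : ℝ) ^ m / m !
      = ∑ k ∈ range n, (n : ℝ) ^ k / k ! * ∑ j ∈ range (n + 1 - k), 1 / (j ! : ℝ) +
          ∑ k ∈ range n, (n : ℝ) ^ k / k ! * expTail (n + 1 - k) := by
        rw [mul_sum, ← sum_add_distrib]
        refine sum_congr rfl fun k _ => ?_
        rw [expTail]
        ring
    _ ≤ ∑ k ∈ range n, (n : ℝ) ^ k / k ! * ∑ j ∈ range (n + 1 - k), 1 / (j ! : ℝ) +
          n ^ n / n ! := by gcongr
    _ = ∑ m ∈ range (n + 1), ((n : ℝ) + 1) ^ m / m ! := by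
        rw [sum_range_add_pow_div_factorial, sum_range_succ]
        simp

theorem ProbabilityTheory.iIndepFun.hasLaw_sum_poissonMeasure {Ω ι : Type*}
    {mΩ : MeasurableSpace Ω} {P : Measure Ω} {X : ι → Ω → ℕ} {r : ι → ℝ≥0}
    (hindep : iIndepFun X P) (hX : ∀ i, HasLaw (X i) Po(r i) P) {s : Finset ι}
    (hs : s.Nonempty) : HasLaw (∑ i ∈ s, X i) Po(∑ i ∈ s, r i) P := by
  induction hs using Finset.Nonempty.cons_induction with
  | singleton i => simpa using hX i
  | cons i s hi hs ih =>
    rw [sum_cons, sum_cons]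
    exact (hindep.indepFun_finsetSum_of_notMem₀ (fun j => (hX j).aemeasurable) hi).symm
      |>.hasLaw_add_poissonMeasure (hX i) ih

theorem poissonMeasure_real_Iio (r : ℝ≥0) (c : ℕ) :
    Po(r).real (Set.Iio c) = ∑ m ∈ range c, exp (-r) * r ^ m / m ! := by
  simp_rw [← coe_range, ← sum_measureReal_singleton, poissonMeasure_real_singleton]

theorem poissonMeasure_natCast_Iio_le (n : ℕ) :
    Po((n : ℝ≥0)) (Set.Iio n) ≤ Po(((n + 1 : ℕ) : ℝ≥0)) (Set.Iio (n + 1)) := by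
  rw [← ENNReal.toReal_le_toReal (measure_ne_top _ _) (measure_ne_top _ _)]
  change Po(_).real _ ≤ Po(_).real _
  rw [poissonMeasure_real_Iio, poissonMeasure_real_Iio]
  push_cast
  have hexp : exp (-(n : ℝ)) = exp (-(n + 1)) * exp 1 := by rw [← exp_add]; ring_nf
  calc ∑ m ∈ range n, exp (-(n : ℝ)) * n ^ m / m !
      = exp (-(n + 1)) * (exp 1 * ∑ m ∈ range n, (n : ℝ) ^ m / m !) := by
        simp only [mul_sum, hexp, mul_div_assoc, mul_assoc]
    _ ≤ exp (-(n + 1)) * ∑ m ∈ range (n + 1), ((n : ℝ) + 1) ^ m / m ! := by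
        gcongr
        exact exp_one_mul_sum_pow_div_factorial_le n
    _ = ∑ m ∈ range (n + 1), exp (-((n : ℝ) + 1)) * (n + 1) ^ m / m ! := by
        simp only [mul_sum, mul_div_assoc]

theorem antitone_poissonMeasure_natCast_Ici : Antitone fun n : ℕ => Po((n : ℝ≥0)) (Set.Ici n) :=
  antitone_nat_of_succ_le fun n => by
    simp only [← Set.compl_Iio, prob_compl_eq_one_sub measurableSet_Iio]
    exact tsub_le_tsub_left (poissonMeasure_natCast_Iio_le n) 1

theorem stmt15_general {Ω : Type*} [MeasureSpace Ω]
    (lam : ℕ → ℕ)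
    (X : ℕ → Ω → ℕ) (hmeas : ∀ i, Measurable (X i))
    (hindep : iIndepFun X ℙ)
    (hdist : ∀ i, Measure.map (X i) ℙ = poissonMeasure (lam i : ℝ≥0)) :
    ∀ k : ℕ, 1 ≤ k →
      ℙ {ω | (∑ i ∈ Finset.Icc 1 (k + 1), lam i) ≤ ∑ i ∈ Finset.Icc 1 (k + 1), X i ω}
        ≤ ℙ {ω | (∑ i ∈ Finset.Icc 1 k, lam i) ≤ ∑ i ∈ Finset.Icc 1 k, X i ω} := by
  intro k hk
  have hX : ∀ i, HasLaw (X i) Po(lam i) ℙ := fun i => ⟨(hmeas i).aemeasurable, hdist i⟩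
  have htail : ∀ n, 1 ≤ n →
      ℙ {ω | (∑ i ∈ Icc 1 n, lam i) ≤ ∑ i ∈ Icc 1 n, X i ω}
        = Po(((∑ i ∈ Icc 1 n, lam i : ℕ) : ℝ≥0)) (Set.Ici (∑ i ∈ Icc 1 n, lam i)) := by
    intro n hn
    have hsum := hindep.hasLaw_sum_poissonMeasure hX (nonempty_Icc.2 hn)
    rw [← Nat.cast_sum] at hsum
    have hlaw := hsum.measure_eq (p := ((∑ i ∈ Icc 1 n, lam i) ≤ ·)) measurableSet_Ici
    simp only [Finset.sum_apply] at hlaw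
    exact hlaw
  rw [htail k hk, htail (k + 1) (by omega)]
  exact antitone_poissonMeasure_natCast_Ici (sum_le_sum_of_subset (Icc_subset_Icc_right k.le_succ))

theorem stmt15 {Ω : Type*} [MeasureSpace Ω] [IsProbabilityMeasure (ℙ : Measure Ω)]
    (lam : ℕ → ℕ) (hpos : ∀ i, 0 < lam i)
    (hlam : ∀ k : ℕ, 1 ≤ k → lam (k + 1) ≤ ∑ i ∈ Finset.Icc 1 k, lam i)
    (X : ℕ → Ω → ℕ) (hmeas : ∀ i, Measurable (X i))
    (hindep : iIndepFun X ℙ)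
    (hdist : ∀ i, Measure.map (X i) ℙ = poissonMeasure (lam i : ℝ≥0)) :
    ∀ k : ℕ, 1 ≤ k →
      ℙ {ω | (∑ i ∈ Finset.Icc 1 (k + 1), lam i) ≤ ∑ i ∈ Finset.Icc 1 (k + 1), X i ω}
        ≤ ℙ {ω | (∑ i ∈ Finset.Icc 1 k, lam i) ≤ ∑ i ∈ Finset.Icc 1 k, X i ω} :=
  stmt15_general lam X hmeas hindep hdist
end

section
/- For every positive integer k, P(Poisson(k) ≥ k) ≥ P(Poisson(k+1) ≥ k+1). -/
open ProbabilityTheory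
open scoped NNReal

/-!
Write `S(t) = ∑_{j ≤ k} e^{-t} t^j / j!` for the Poisson distribution function at `k` as a function
of the rate. The sum telescopes under differentiation: `S'(t) = -e^{-t} t^k / k!`, and
`t ↦ e^{-t} t^k` is maximal at `t = k`. Hence `S(k) - S(k+1) ≤ e^{-k} k^k / k!`, i.e.
`P(Po(k) < k) ≤ P(Po(k+1) ≤ k)`, which is the claim after passing to complements.
-/

open Real Finset Nat

-- `poissonPMFReal` with the rate in `ℝ` rather than `ℝ≥0`, so that it can be differentiated in it.
noncomputable def poissonTerm (n : ℕ) (t : ℝ) : ℝ := exp (-t) * t ^ n / n !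

lemma poissonTerm_nonneg (n : ℕ) {t : ℝ} (ht : 0 ≤ t) : 0 ≤ poissonTerm n t := by
  unfold poissonTerm; positivity

lemma hasDerivAt_poissonTerm_zero (t : ℝ) :
    HasDerivAt (poissonTerm 0) (-poissonTerm 0 t) t := by
  have h : poissonTerm 0 = fun s ↦ exp (-s) := by
    funext s; simp [poissonTerm]
  simpa [h] using (hasDerivAt_neg t).exp

lemma hasDerivAt_poissonTerm_succ (n : ℕ) (t : ℝ) :
    HasDerivAt (poissonTerm (n + 1)) (poissonTerm n t - poissonTerm (n + 1) t) t := by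
  have h := (((hasDerivAt_neg t).exp).mul (hasDerivAt_pow (n + 1) t)).div_const
    ((n + 1)! : ℝ)
  refine h.congr_deriv ?_
  simp only [poissonTerm, Nat.add_sub_cancel, Nat.factorial_succ, Nat.cast_mul]
  field_simp
  push_cast
  ring

lemma hasDerivAt_sum_poissonTerm (n : ℕ) (t : ℝ) :
    HasDerivAt (fun s ↦ ∑ j ∈ range (n + 1), poissonTerm j s) (-poissonTerm n t) t := by
  induction n with
  | zero => simpa using hasDerivAt_poissonTerm_zero t
  | succ n ih =>
    simp_rw [sum_range_succ _ (n + 1)]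
    exact (ih.fun_add (hasDerivAt_poissonTerm_succ n t)).congr_deriv (by ring)

lemma exp_neg_mul_pow_le (n : ℕ) {t : ℝ} (ht : 0 ≤ t) :
    exp (-t) * t ^ n ≤ exp (-n) * (n : ℝ) ^ n := by
  rcases n.eq_zero_or_pos with rfl | hn
  · simpa using ht
  have hn' : (0 : ℝ) < n := by exact_mod_cast hn
  -- `x ≤ e^{x-1}` at `x = t/n`, raised to the `n`-th power
  have key : (t / n) ^ n ≤ exp (t / n - 1) ^ n :=
    pow_le_pow_left₀ (by positivity) (by linarith [add_one_le_exp (t / n - 1)]) n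
  rw [← exp_nat_mul, mul_sub, mul_div_cancel₀ _ hn'.ne', mul_one, div_pow,
    div_le_iff₀ (by positivity), exp_sub] at key
  calc exp (-t) * t ^ n ≤ exp (-t) * (exp t / exp n * (n : ℝ) ^ n) := by gcongr
    _ = exp (-n) * (n : ℝ) ^ n := by
      rw [exp_neg, exp_neg]; field_simp

lemma poissonTerm_le_poissonTerm_self (n : ℕ) {t : ℝ} (ht : 0 ≤ t) :
    poissonTerm n t ≤ poissonTerm n n :=
  div_le_div_of_nonneg_right (exp_neg_mul_pow_le n ht) (by positivity)

lemma sum_range_poissonTerm_le (n : ℕ) :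
    ∑ j ∈ range n, poissonTerm j n ≤ ∑ j ∈ range (n + 1), poissonTerm j (n + 1) := by
  have hderiv := hasDerivAt_sum_poissonTerm n
  have hgrowth := (convex_Ici (0 : ℝ)).mul_sub_le_image_sub_of_le_deriv (C := -poissonTerm n n)
    (fun t _ ↦ (hderiv t).continuousAt.continuousWithinAt)
    (fun t _ ↦ (hderiv t).differentiableAt.differentiableWithinAt)
    (fun t ht ↦ by
      rw [interior_Ici] at ht
      rw [(hderiv t).deriv, neg_le_neg_iff]
      exact poissonTerm_le_poissonTerm_self n ht.le)
    n (Set.mem_Ici.2 n.cast_nonneg) (n + 1) (Set.mem_Ici.2 (by positivity)) (by linarith)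
  rw [sum_range_succ (fun j ↦ poissonTerm j n) n] at hgrowth
  linarith

lemma poissonMeasure_setOf_le (r : ℝ≥0) (m : ℕ) :
    poissonMeasure r {n | m ≤ n} = 1 - ENNReal.ofReal (∑ j ∈ range m, poissonTerm j r) := by
  have hcompl : {n | m ≤ n} = ((range m : Set ℕ))ᶜ := by
    ext n; simp
  rw [hcompl, MeasureTheory.prob_compl_eq_one_sub (range m).measurableSet,
    ← MeasureTheory.sum_measure_singleton, ENNReal.ofReal_sum_of_nonneg
      (fun j _ ↦ poissonTerm_nonneg j r.coe_nonneg)]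
  simp only [poissonMeasure_singleton, poissonTerm]

theorem stmt16_general (k : ℕ) :
    poissonMeasure ((k : ℝ≥0) + 1) {n : ℕ | k + 1 ≤ n}
      ≤ poissonMeasure (k : ℝ≥0) {n : ℕ | k ≤ n} := by
  rw [poissonMeasure_setOf_le, poissonMeasure_setOf_le]
  refine tsub_le_tsub_left (ENNReal.ofReal_le_ofReal ?_) _
  push_cast
  exact sum_range_poissonTerm_le k

theorem stmt16 (k : ℕ) (hk : 0 < k) :
    poissonMeasure ((k : ℝ≥0) + 1) {n : ℕ | k + 1 ≤ n}
      ≤ poissonMeasure (k : ℝ≥0) {n : ℕ | k ≤ n} :=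
  stmt16_general k
end

section
/- Let n, m be positive integers with n ≥ 2m, let k ≥ 1, and let S ∼ Binomial(nk, m/n). Then S is right-skewed with mode km: P(S = km − i) ≤ P(S = km + i − 1) for all i ∈ {1,...,km}. -/
noncomputable def binpmf (N : ℕ) (p : ℝ) (j : ℕ) : ℝ :=
  (Nat.choose N j : ℝ) * p ^ j * (1 - p) ^ (N - j)

lemma binpmf_nonneg (N : ℕ) (p : ℝ) (hp : 0 ≤ p) (hq : 0 ≤ 1 - p) (j : ℕ) :
    0 ≤ binpmf N p j := by
  unfold binpmf; positivity

lemma binpmf_rec (N : ℕ) (p : ℝ) {j : ℕ} (hj : j < N) :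
    binpmf N p (j + 1) * (((j : ℝ) + 1) * (1 - p))
      = binpmf N p j * (((N : ℝ) - j) * p) := by
  unfold binpmf
  have h1 : N - (j + 1) + 1 = N - j := by omega
  have h2 : ((N.choose (j + 1) : ℝ)) * ((j : ℝ) + 1)
      = (N.choose j : ℝ) * ((N : ℝ) - (j : ℝ)) := by
    have h := Nat.choose_succ_right_eq N j
    have h' := congrArg (Nat.cast : ℕ → ℝ) h
    push_cast [Nat.cast_sub hj.le] at h'
    linarith
  calc (N.choose (j+1) : ℝ) * p ^ (j+1) * (1-p) ^ (N - (j+1)) * (((j:ℝ)+1) * (1-p))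
      = ((N.choose (j+1) : ℝ) * ((j:ℝ)+1)) * p ^ (j+1) * ((1-p) ^ (N - (j+1)) * (1-p)) := by
        ring
    _ = ((N.choose j : ℝ) * ((N:ℝ) - j)) * (p ^ j * p) * (1-p) ^ (N - j) := by
        rw [h2, ← pow_succ, ← pow_succ, h1, pow_succ]
    _ = (N.choose j : ℝ) * p ^ j * (1-p) ^ (N - j) * (((N:ℝ) - j) * p) := by ring

set_option maxHeartbeats 1600000 in
lemma binpmf_main (N s : ℕ) (p : ℝ) (hp : 0 < p) (hpq : p ≤ 1 - p)
    (hkey : ((N : ℝ) - s) * p = (s : ℝ) * (1 - p)) (h2s : 2 * s ≤ N) (hs : 1 ≤ s) :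
    ∀ i : ℕ, i + 1 ≤ s → binpmf N p (s - (i + 1)) ≤ binpmf N p (s + i) := by
  have hq : 0 < 1 - p := lt_of_lt_of_le hp hpq
  have hsN : s ≤ N := by omega
  have fnn := binpmf_nonneg N p hp.le hq.le
  intro i
  induction i with
  | zero =>
    intro h1s
    have hjN : s - 1 < N := by omega
    have hrec := binpmf_rec N p hjN
    have hs1 : s - 1 + 1 = s := by omega
    have hcast : ((s - 1 : ℕ) : ℝ) = (s : ℝ) - 1 := by
      push_cast [Nat.cast_sub hs]; ring
    rw [hs1, hcast] at hrec
    -- hrec : binpmf N p s * (((s:ℝ)-1+1)*(1-p)) = binpmf N p (s-1) * (((N:ℝ)-((s:ℝ)-1))*p)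
    have hspos : (0 : ℝ) < (s : ℝ) * (1 - p) := by
      have : (1 : ℝ) ≤ (s : ℝ) := by exact_mod_cast hs
      nlinarith
    have key : binpmf N p (s - 1) * ((s : ℝ) * (1 - p))
        ≤ binpmf N p s * ((s : ℝ) * (1 - p)) := by
      have e1 : binpmf N p s * ((s : ℝ) * (1 - p))
          = binpmf N p (s - 1) * (((s : ℝ) * (1 - p)) + p) := by
        have : ((N : ℝ) - ((s : ℝ) - 1)) * p = ((N : ℝ) - s) * p + p := by ring
        have e2 : ((s:ℝ) - 1 + 1) * (1 - p) = (s : ℝ) * (1 - p) := by ring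
        rw [e2] at hrec
        rw [hrec, this, hkey]
      rw [e1]
      have := mul_nonneg (fnn (s - 1)) hp.le
      nlinarith [fnn (s - 1)]
    simpa using le_of_mul_le_mul_right key hspos
  | succ i ih =>
    intro h2
    have ihyp := ih (by omega)
    set A := s - (i + 2) with hA
    have hA1 : A + 1 = s - (i + 1) := by omega
    have hAN : A < N := by omega
    have hBN : s + i < N := by omega
    have recA := binpmf_rec N p hAN
    have recB := binpmf_rec N p hBN
    rw [hA1] at recA
    have hAc : ((A : ℕ) : ℝ) = (s : ℝ) - (i : ℝ) - 2 := by
      rw [hA, Nat.cast_sub h2]; push_cast; ring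
    have hBc : (((s + i : ℕ)) : ℝ) = (s : ℝ) + (i : ℝ) := by push_cast; ring
    rw [hAc] at recA
    rw [hBc] at recB
    -- recA : binpmf N p (s-(i+1)) * (((s:ℝ)-i-2+1)*(1-p)) = binpmf N p A * (((N:ℝ)-((s:ℝ)-i-2))*p)
    -- recB : binpmf N p (s+i+1) * (((s:ℝ)+i+1)*(1-p)) = binpmf N p (s+i) * (((N:ℝ)-((s:ℝ)+i))*p)
    set x : ℝ := (N : ℝ) - (s : ℝ) with hx
    have hxs : (s : ℝ) ≤ x := by
      have : ((2 * s : ℕ) : ℝ) ≤ (N : ℝ) := by exact_mod_cast h2s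
      push_cast at this
      rw [hx]; linarith
    have hs0 : (1 : ℝ) ≤ (s : ℝ) := by exact_mod_cast hs
    have hi2 : (i : ℝ) + 2 ≤ (s : ℝ) := by exact_mod_cast h2
    have hsq : x ^ 2 * p ^ 2 = (s : ℝ) ^ 2 * (1 - p) ^ 2 := by
      have : (x * p) ^ 2 = ((s : ℝ) * (1 - p)) ^ 2 := by rw [hkey]
      nlinarith [this]
    -- key inequality
    have hkeyineq : (((s : ℝ) - i - 1) * (1 - p)) * (((s : ℝ) + i + 1) * (1 - p))
        ≤ ((x + i + 2) * p) * ((x - i) * p) := by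
      have hq2 : p ^ 2 ≤ (1 - p) ^ 2 := by nlinarith
      have e : ((x + i + 2) * p) * ((x - i) * p)
          - ((((s : ℝ) - i - 1) * (1 - p)) * (((s : ℝ) + i + 1) * (1 - p)))
          = (x ^ 2 * p ^ 2 - (s : ℝ) ^ 2 * (1 - p) ^ 2) + (2 * x + 1) * p ^ 2
            + ((i : ℝ) + 1) ^ 2 * ((1 - p) ^ 2 - p ^ 2) := by ring
      have t1 : (0:ℝ) ≤ (2 * x + 1) * p ^ 2 :=
        mul_nonneg (by linarith : (0:ℝ) ≤ 2 * x + 1) (sq_nonneg p)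
      have t2 : (0:ℝ) ≤ ((i : ℝ) + 1) ^ 2 * ((1 - p) ^ 2 - p ^ 2) :=
        mul_nonneg (sq_nonneg _) (by linarith)
      linarith [e, t1, t2, hsq]
    have hposA : (0 : ℝ) < (x + i + 2) * p := by
      have : (0:ℝ) ≤ (i:ℝ) := Nat.cast_nonneg i
      nlinarith
    have hposB : (0 : ℝ) < (x - i) * p := by nlinarith
    -- chain
    have hqnn : (0:ℝ) ≤ 1 - p := hq.le
    have c1 : binpmf N p A * (((x + i + 2) * p) * ((x - i) * p))
        ≤ binpmf N p (s + i + 1) * (((x + i + 2) * p) * ((x - i) * p)) := by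
      have eA : binpmf N p A * ((x + i + 2) * p)
          = binpmf N p (s - (i + 1)) * (((s : ℝ) - i - 1) * (1 - p)) := by
        have : ((N:ℝ) - ((s:ℝ) - i - 2)) * p = (x + i + 2) * p := by rw [hx]; ring
        rw [← this, ← recA]; ring_nf
      have eB : binpmf N p (s + i + 1) * (((s : ℝ) + i + 1) * (1 - p))
          = binpmf N p (s + i) * ((x - i) * p) := by
        have : ((N:ℝ) - ((s:ℝ) + i)) * p = (x - i) * p := by rw [hx]; ring
        rw [← this]
        exact recB
      calc binpmf N p A * (((x + i + 2) * p) * ((x - i) * p))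
          = (binpmf N p A * ((x + i + 2) * p)) * ((x - i) * p) := by ring
        _ = (binpmf N p (s - (i + 1)) * (((s : ℝ) - i - 1) * (1 - p))) * ((x - i) * p) := by
            rw [eA]
        _ ≤ (binpmf N p (s + i) * (((s : ℝ) - i - 1) * (1 - p))) * ((x - i) * p) := by
            have hf1 : (0:ℝ) ≤ ((s : ℝ) - i - 1) * (1 - p) := by
              apply mul_nonneg _ hqnn; linarith
            have := mul_le_mul_of_nonneg_right
              (mul_le_mul_of_nonneg_right ihyp hf1) hposB.le
            linarith [this]
        _ = (binpmf N p (s + i) * ((x - i) * p)) * (((s : ℝ) - i - 1) * (1 - p)) := by ring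
        _ = (binpmf N p (s + i + 1) * (((s : ℝ) + i + 1) * (1 - p))) * (((s : ℝ) - i - 1) * (1 - p)) := by
            rw [eB]
        _ = binpmf N p (s + i + 1) * ((((s : ℝ) - i - 1) * (1 - p)) * (((s : ℝ) + i + 1) * (1 - p))) := by
            ring
        _ ≤ binpmf N p (s + i + 1) * (((x + i + 2) * p) * ((x - i) * p)) := by
            exact mul_le_mul_of_nonneg_left hkeyineq (fnn _)
    have hpos : (0:ℝ) < ((x + i + 2) * p) * ((x - i) * p) := mul_pos hposA hposB
    have := le_of_mul_le_mul_right c1 hpos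
    have hgoal : s + (i + 1) = s + i + 1 := by omega
    rw [hgoal]
    exact this

theorem stmt17 (n m k : ℕ) (hm : 0 < m) (hn : 2 * m ≤ n) (hk : 1 ≤ k) :
    ∀ i ∈ Finset.Icc 1 (k * m),
      (Nat.choose (n * k) (k * m - i) : ℝ) * ((m : ℝ) / n) ^ (k * m - i)
          * (1 - (m : ℝ) / n) ^ (n * k - (k * m - i))
        ≤ (Nat.choose (n * k) (k * m + i - 1) : ℝ) * ((m : ℝ) / n) ^ (k * m + i - 1)
          * (1 - (m : ℝ) / n) ^ (n * k - (k * m + i - 1)) := by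
  intro i hi
  obtain ⟨hi1, his⟩ := Finset.mem_Icc.mp hi
  have hn0 : 0 < n := by omega
  have hnR : (0 : ℝ) < (n : ℝ) := by exact_mod_cast hn0
  have hp : (0 : ℝ) < (m : ℝ) / n := by positivity
  have hpq : (m : ℝ) / n ≤ 1 - (m : ℝ) / n := by
    have h2 : ((2 * m : ℕ) : ℝ) ≤ (n : ℝ) := by exact_mod_cast hn
    push_cast at h2
    have h3 : (m : ℝ) / n ≤ 1 / 2 := by
      rw [div_le_div_iff₀ hnR (by norm_num : (0:ℝ) < 2)]; linarith
    linarith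
  have hkey : (((n * k : ℕ) : ℝ) - ((k * m : ℕ) : ℝ)) * ((m : ℝ) / n)
      = ((k * m : ℕ) : ℝ) * (1 - (m : ℝ) / n) := by
    push_cast
    field_simp
  have h2s : 2 * (k * m) ≤ n * k := by
    calc 2 * (k * m) = (2 * m) * k := by ring
      _ ≤ n * k := Nat.mul_le_mul_right k hn
  have hs : 1 ≤ k * m := Nat.one_le_iff_ne_zero.mpr (by positivity)
  have := binpmf_main (n * k) (k * m) ((m : ℝ) / n) hp hpq hkey h2s hs (i - 1) (by omega)
  rw [show i - 1 + 1 = i from by omega, show k * m + (i - 1) = k * m + i - 1 from by omega] at this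
  exact this
end
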